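/- Let f: M → ℝ be an isotone function on a space-time (M,g) and x: I → M a timelike curve. Then f is upper (respectively lower) semi-continuous at x₀ = x(t₀) if and only if the composition f ∘ x is upper (respectively lower) semi-continuous at t₀. -/
import Mathlib


open Filter Topology Set
open scoped ENNReal

/-- Abstract presentation of a space-time `(M,g)` through its chronological relation
`chron` (`q ∈ I⁺(p)`), causal relation `causal` (`q ∈ J⁺(p)`), and Lorentzian distance
`dist`, together with the standard axioms these satisfy on a time-oriented Lorentzian
manifold. -/
structure SpacetimeData (M : Type*) [TopologicalSpace M] : Type _ where
  chron : M → M → Prop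
  causal : M → M → Prop
  dist : M → M → ℝ≥0∞
  chron_causal : ∀ {p q}, chron p q → causal p q
  causal_refl : ∀ p, causal p p
  causal_trans : ∀ {p q r}, causal p q → causal q r → causal p r
  pushup_left : ∀ {p q r}, chron p q → causal q r → chron p r
  pushup_right : ∀ {p q r}, causal p q → chron q r → chron p r
  isOpen_chronFuture : ∀ p, IsOpen {q | chron p q}
  isOpen_chronPast : ∀ q, IsOpen {p | chron p q}
  dist_eq_zero_of_not_causal : ∀ {p q}, ¬ causal p q → dist p q = 0
  chron_of_dist_pos : ∀ {p q}, 0 < dist p q → chron p q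
  dist_pos_of_chron : ∀ {p q}, chron p q → 0 < dist p q
  rev_triangle : ∀ {p q r}, causal p q → causal q r → dist p q + dist q r ≤ dist p r
  dist_lsc_fst : ∀ q, LowerSemicontinuous fun p => dist p q
  dist_lsc_snd : ∀ p, LowerSemicontinuous fun q => dist p q

namespace SpacetimeData

variable {M : Type*} [TopologicalSpace M] (S : SpacetimeData M)

/-- The cosmological time function `τ(q) = sup_{p ≤ q} d(p,q)`. -/
noncomputable def tau (q : M) : ℝ≥0∞ := ⨆ p ∈ {p | S.causal p q}, S.dist p q

/-- `γ` is a future-directed causal curve on the interval `I`. -/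
def IsFutureCausalCurveOn (γ : ℝ → M) (I : Set ℝ) : Prop :=
  ContinuousOn γ I ∧ ∀ ⦃s t : ℝ⦄, s ∈ I → t ∈ I → s < t → S.causal (γ s) (γ t) ∧ γ s ≠ γ t

/-- `γ` is a future-directed timelike curve on the interval `I`. -/
def IsFutureTimelikeCurveOn (γ : ℝ → M) (I : Set ℝ) : Prop :=
  ContinuousOn γ I ∧ ∀ ⦃s t : ℝ⦄, s ∈ I → t ∈ I → s < t → S.chron (γ s) (γ t)

/-- `γ : [0,∞) → M` is a past-directed causal curve (running into the past). -/
def IsPastCausalCurve (γ : ℝ → M) : Prop :=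
  ContinuousOn γ (Ici 0) ∧ ∀ ⦃s t : ℝ⦄, 0 ≤ s → s < t → S.causal (γ t) (γ s) ∧ γ t ≠ γ s

/-- `γ : [0,∞) → M` is inextendible (has no endpoint as the parameter goes to infinity). -/
def IsInext (γ : ℝ → M) : Prop := ¬ ∃ p : M, Tendsto γ atTop (𝓝 p)

/-- A past-inextendible causal curve, parametrized on `[0,∞)` towards the past. -/
def IsPastInextCausalCurve (γ : ℝ → M) : Prop :=
  S.IsPastCausalCurve γ ∧ IsInext γ

/-- A past lightlike ray: a past-inextendible achronal causal curve, i.e. a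
past-inextendible null geodesic ray maximizing on each of its segments. -/
def IsPastLightlikeRay (γ : ℝ → M) : Prop :=
  S.IsPastInextCausalCurve γ ∧ ∀ ⦃s t : ℝ⦄, 0 ≤ s → s ≤ t → ¬ S.chron (γ t) (γ s)

/-- A future lightlike ray: a future-inextendible achronal causal curve, i.e. a
future-inextendible null geodesic ray maximizing on each of its segments. -/
def IsFutureLightlikeRay (γ : ℝ → M) : Prop :=
  (ContinuousOn γ (Ici 0) ∧ ∀ ⦃s t : ℝ⦄, 0 ≤ s → s < t → S.causal (γ s) (γ t) ∧ γ s ≠ γ t) ∧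
    IsInext γ ∧ ∀ ⦃s t : ℝ⦄, 0 ≤ s → s ≤ t → ¬ S.chron (γ s) (γ t)

/-- No closed timelike curves. -/
def Chronological : Prop := ∀ p : M, ¬ S.chron p p

/-- No closed causal curves. -/
def Causal : Prop :=
  S.Chronological ∧ ∀ ⦃p q : M⦄, S.causal p q → S.causal q p → p = q

/-- Every point has arbitrarily small causally convex neighbourhoods. -/
def StronglyCausal : Prop :=
  ∀ p : M, ∀ U ∈ 𝓝 p, ∃ V ∈ 𝓝 p, V ⊆ U ∧
    ∀ ⦃x y z : M⦄, x ∈ V → y ∈ V → S.causal x z → S.causal z y → z ∈ V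

/-- Causal with compact causal diamonds. -/
def GloballyHyperbolic : Prop :=
  S.Causal ∧ ∀ p q : M, IsCompact {z | S.causal p z ∧ S.causal z q}

/-- `p ∈ cl(I⁻(q)) ↔ q ∈ cl(I⁺(p))`. -/
def Reflecting : Prop :=
  ∀ p q : M, p ∈ closure {x | S.chron x q} ↔ q ∈ closure {y | S.chron p y}

/-- Causal, with closed causal futures and pasts. -/
def CausallySimple : Prop :=
  S.Causal ∧ ∀ p : M, IsClosed {q | S.causal p q} ∧ IsClosed {q | S.causal q p}

/-- The cosmological time function is regular: finite everywhere and tending to `0`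
along every past-inextendible causal curve. -/
def RegularTau : Prop :=
  (∀ q : M, S.tau q < ⊤) ∧
    ∀ γ : ℝ → M, S.IsPastInextCausalCurve γ → Tendsto (fun t => S.tau (γ t)) atTop (𝓝 0)

end SpacetimeData

/-- If `f` is isotone and `x` is a timelike curve with `x₀ = x t₀`, then
`f` is upper (resp. lower) semi-continuous at `x₀` iff `f ∘ x` is upper (resp. lower)
semi-continuous at `t₀`. -/
theorem isotone_semicontinuity_along_timelike {M : Type*} [TopologicalSpace M]
    (S : SpacetimeData M) (f : M → ℝ) (hf : ∀ p q : M, S.causal p q → f p ≤ f q)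
    (x : ℝ → M) (a b t₀ : ℝ) (ht₀ : t₀ ∈ Set.Ioo a b)
    (hx : S.IsFutureTimelikeCurveOn x (Set.Ioo a b)) :
    (UpperSemicontinuousAt f (x t₀) ↔ UpperSemicontinuousAt (f ∘ x) t₀) ∧
      (LowerSemicontinuousAt f (x t₀) ↔ LowerSemicontinuousAt (f ∘ x) t₀) := by
  have hmem : Set.Ioo a b ∈ 𝓝 t₀ := Ioo_mem_nhds ht₀.1 ht₀.2
  have hcont : ContinuousAt x t₀ := (hx.1.continuousAt hmem)
  constructor
  · constructor
    · intro h y hy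
      exact hcont.eventually (h y hy)
    · intro h y hy
      obtain ⟨t₁, ht₁, hmem₁, hgt⟩ :
          ∃ t₁, f (x t₁) < y ∧ t₁ ∈ Set.Ioo a b ∧ t₀ < t₁ := by
        have h1 : ∀ᶠ t in 𝓝[>] t₀, f (x t) < y ∧ t ∈ Set.Ioo a b ∧ t₀ < t :=
          ((((h y hy).and (hmem : ∀ᶠ t in 𝓝 t₀, t ∈ Set.Ioo a b)).filter_mono
            nhdsWithin_le_nhds)).and
            self_mem_nhdsWithin |>.mono fun t ⟨⟨h1, h2⟩, h3⟩ => ⟨h1, h2, h3⟩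
        obtain ⟨t₁, h1, h2, h3⟩ := h1.exists
        exact ⟨t₁, h1, h2, h3⟩
      have hchron : S.chron (x t₀) (x t₁) := hx.2 ht₀ hmem₁ hgt
      have hopen : {q | S.chron q (x t₁)} ∈ 𝓝 (x t₀) :=
        (S.isOpen_chronPast (x t₁)).mem_nhds hchron
      filter_upwards [hopen] with q hq
      exact lt_of_le_of_lt (hf _ _ (S.chron_causal hq)) ht₁
  · constructor
    · intro h y hy
      exact hcont.eventually (h y hy)
    · intro h y hy
      obtain ⟨t₁, ht₁, hmem₁, hlt⟩ :
          ∃ t₁, y < f (x t₁) ∧ t₁ ∈ Set.Ioo a b ∧ t₁ < t₀ := by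
        have h1 : ∀ᶠ t in 𝓝[<] t₀, y < f (x t) ∧ t ∈ Set.Ioo a b ∧ t < t₀ :=
          ((((h y hy).and (hmem : ∀ᶠ t in 𝓝 t₀, t ∈ Set.Ioo a b)).filter_mono
            nhdsWithin_le_nhds)).and
            self_mem_nhdsWithin |>.mono fun t ⟨⟨h1, h2⟩, h3⟩ => ⟨h1, h2, h3⟩
        obtain ⟨t₁, h1, h2, h3⟩ := h1.exists
        exact ⟨t₁, h1, h2, h3⟩
      have hchron : S.chron (x t₁) (x t₀) := hx.2 hmem₁ ht₀ hlt
      have hopen : {q | S.chron (x t₁) q} ∈ 𝓝 (x t₀) :=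
        (S.isOpen_chronFuture (x t₁)).mem_nhds hchron
      filter_upwards [hopen] with q hq
      exact lt_of_lt_of_le ht₁ (hf _ _ (S.chron_causal hq))
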